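/- arXiv:1802.01283 — 3 statements merged into one kernel-verified Lean document; each statement's English description precedes it below -/
import Mathlib

section
/- Let R = ⊕_{(i,j) ∈ ℕ₀²} R_{(i,j)} be a standard Noetherian ℕ₀²-graded algebra with A = R_{(0,0)} Noetherian, and let M = ⊕ M_{(r,s)} be a finitely generated bigraded R-module. Then there exists (n₀, i₀) ∈ ℕ₀² such that Ass_A(M_{(n,i)}) = Ass_A(M_{(n₀,i₀)}) for all (n, i) with n ≥ n₀ and i ≥ i₀. -/
/-!
Fix a prime `p` of `A`. The elements of `M` killed by `p` form a homogeneous `R`-submodule `H`,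
the elements killed by some `a ∉ p` form an `R`-submodule `T`, and `p ∈ Ass_A(M_m)` exactly when
`M_m ∩ H ⊄ T`. As `R` is standard, `R_{d+e} = R_d R_e`; hence once `m` dominates the degrees of a
finite homogeneous generating set of `H`, we get `M_{m'} ∩ H ⊆ R · (M_m ∩ H)` for all `m' ≥ m`,
so `M_m ∩ H ⊆ T` propagates upwards and membership of `p` is eventually constant. Every associated
prime of a component contracts from one of the finitely many associated primes of the finite
`R`-module `M`, so only finitely many primes matter and a common bound works for all of them.
-/

open DirectSum Filter Submodule

theorem Filter.eventuallyConst_atTop_of_forall_imp {α : Type*} [Preorder α] {q : α → Prop}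
    (t₀ : α) (h : ∀ m m', t₀ ≤ m → m ≤ m' → q m → q m') : EventuallyConst q atTop := by
  rw [eventuallyConst_pred]
  by_cases hq : ∃ m, t₀ ≤ m ∧ q m
  · obtain ⟨m, ht₀m, hm⟩ := hq
    exact Or.inl ((eventually_ge_atTop m).mono fun m' hmm' => h m m' ht₀m hmm' hm)
  · push Not at hq
    exact Or.inr ((eventually_ge_atTop t₀).mono hq)

theorem Filter.eventuallyConst_set_of_finite {ι α : Type*} {l : Filter ι} {f : ι → Set α}
    {F : Set α} (hF : F.Finite) (hf : ∀ i, f i ⊆ F)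
    (h : ∀ a ∈ F, EventuallyConst (fun i => a ∈ f i) l) : EventuallyConst f l := by
  simp only [l.basis_sets.eventuallyConst_iff, id] at h ⊢
  choose! s hsl hs using h
  refine ⟨⋂ a ∈ F, s a, (biInter_mem hF).mpr hsl, fun x hx y hy => Set.ext fun a => ?_⟩
  by_cases ha : a ∈ F
  · exact Iff.of_eq (hs a ha x (Set.mem_iInter₂.mp hx a ha) y (Set.mem_iInter₂.mp hy a ha))
  · exact iff_of_false (fun h => ha (hf x h)) (fun h => ha (hf y h))

theorem DirectSum.Decomposition.le_of_iSup_eq_top {ι A M : Type*} [DecidableEq ι] [Semiring A]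
    [AddCommMonoid M] [Module A M] (ℳ : ι → Submodule A M) [Decomposition ℳ]
    {B : ι → Submodule A M} (hB : ∀ i, B i ≤ ℳ i) (htop : ⨆ i, B i = ⊤) (i : ι) :
    ℳ i ≤ B i := by
  have hproj : ∀ y ∈ ⨆ j, B j, ∀ i, (decompose ℳ y i : M) ∈ B i := by
    intro y hy
    refine iSup_induction B (motive := fun y => ∀ i, (decompose ℳ y i : M) ∈ B i) hy
      (fun j y hy i => ?_) (by simp) fun y z hy hz i => ?_
    · by_cases hji : j = i
      · subst hji
        rwa [decompose_of_mem_same ℳ (hB j hy)]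
      · rw [decompose_of_mem_ne ℳ (hB j hy) hji]
        exact zero_mem _
    · rw [decompose_add, DirectSum.add_apply, coe_add]
      exact add_mem (hy i) (hz i)
  intro x hx
  simpa [decompose_of_mem_same ℳ hx] using hproj x (htop ▸ mem_top) i

namespace GradedAlgebra

section Monoid

variable {ι A R : Type*} [DecidableEq ι] [AddMonoid ι] [CommSemiring A] [Semiring R]
  [Algebra A R] (𝒜 : ι → Submodule A R) [GradedAlgebra 𝒜]

theorem mul_le_add (i j : ι) : 𝒜 i * 𝒜 j ≤ 𝒜 (i + j) :=
  mul_le.mpr fun _ hx _ hy => SetLike.mul_mem_graded hx hy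

theorem pow_le_nsmul (i : ι) (n : ℕ) : 𝒜 i ^ n ≤ 𝒜 (n • i) := by
  induction n with
  | zero => simpa using one_le.mpr (SetLike.one_mem_graded 𝒜)
  | succ n ih =>
    rw [pow_succ, succ_nsmul]
    exact (mul_le_mul' ih le_rfl).trans (mul_le_add 𝒜 _ _)

end Monoid

section Bigraded

variable {A R : Type*} [CommSemiring A] [CommSemiring R] [Algebra A R]
  (𝒜 : ℕ × ℕ → Submodule A R) [GradedAlgebra 𝒜]

theorem eq_pow_mul_pow_of_adjoin_eq_top
    (hgen : Algebra.adjoin A ((𝒜 (1, 0) : Set R) ∪ 𝒜 (0, 1)) = ⊤) (d : ℕ × ℕ) :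
    𝒜 d = 𝒜 (1, 0) ^ d.1 * 𝒜 (0, 1) ^ d.2 := by
  set B : ℕ × ℕ → Submodule A R := fun d => 𝒜 (1, 0) ^ d.1 * 𝒜 (0, 1) ^ d.2
  have hB : ∀ d, B d ≤ 𝒜 d := fun d => by
    have hd : d.1 • ((1, 0) : ℕ × ℕ) + d.2 • (0, 1) = d := by ext <;> simp
    exact (mul_le_mul' (pow_le_nsmul 𝒜 _ _) (pow_le_nsmul 𝒜 _ _)).trans
      ((mul_le_add 𝒜 _ _).trans_eq (congrArg 𝒜 hd))
  have hmul : (⨆ d, B d) * (⨆ d, B d) ≤ ⨆ d, B d := by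
    simp only [iSup_mul, mul_iSup, iSup_le_iff]
    intro d e
    convert le_iSup B (d + e) using 1
    simp only [B, Prod.fst_add, Prod.snd_add, pow_add]
    ring
  have htop : ⨆ d, B d = ⊤ := by
    refine eq_top_iff'.mpr fun r => ?_
    have hr : r ∈ Algebra.adjoin A ((𝒜 (1, 0) : Set R) ∪ 𝒜 (0, 1)) := hgen ▸ Algebra.mem_top
    induction hr using Algebra.adjoin_induction with
    | mem x hx =>
      rcases hx with hx | hx
      · exact le_iSup B (1, 0) (by simpa [B] using hx)
      · exact le_iSup B (0, 1) (by simpa [B] using hx)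
    | algebraMap a => exact le_iSup B 0 (by simp [B])
    | add x y _ _ hx hy => exact add_mem hx hy
    | mul x y _ _ hx hy => exact hmul (mul_mem_mul hx hy)
  exact le_antisymm (Decomposition.le_of_iSup_eq_top 𝒜 hB htop d) (hB d)

theorem add_eq_mul_of_adjoin_eq_top
    (hgen : Algebra.adjoin A ((𝒜 (1, 0) : Set R) ∪ 𝒜 (0, 1)) = ⊤) (d e : ℕ × ℕ) :
    𝒜 (d + e) = 𝒜 d * 𝒜 e := by
  rw [eq_pow_mul_pow_of_adjoin_eq_top 𝒜 hgen (d + e), eq_pow_mul_pow_of_adjoin_eq_top 𝒜 hgen d,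
    eq_pow_mul_pow_of_adjoin_eq_top 𝒜 hgen e, Prod.fst_add, Prod.snd_add, pow_add, pow_add]
  ring

end Bigraded

end GradedAlgebra

section HomogeneousSubmodule

theorem Submodule.IsHomogeneous.exists_finset_span_eq {ι A R M : Type*} [DecidableEq ι]
    [CommSemiring A] [CommSemiring R] [AddCommMonoid M] [Module A M] [Module R M]
    (ℳ : ι → Submodule A M) [Decomposition ℳ] {N : Submodule R M} (hN : N.FG)
    (hhom : N.IsHomogeneous ℳ) :
    ∃ s : Finset ι, span R {x | x ∈ N ∧ ∃ i ∈ s, x ∈ ℳ i} = N := by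
  classical
  obtain ⟨S, rfl⟩ := hN
  refine ⟨S.biUnion fun g => (decompose ℳ g).support, le_antisymm ?_ ?_⟩
  · exact span_le.mpr fun x hx => hx.1
  · refine span_le.mpr fun g hg => ?_
    rw [← sum_support_decompose ℳ g]
    exact sum_mem fun i hi => subset_span
      ⟨hhom i (subset_span hg), i, Finset.mem_biUnion.mpr ⟨g, hg, hi⟩, (decompose ℳ g i).2⟩

theorem smul_mem_span_inter {ι A R M : Type*} [AddCommMonoid ι] [CommSemiring A]
    [CommSemiring R] [Algebra A R] [AddCommMonoid M] [Module A M] [Module R M]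
    (𝒜 : ι → Submodule A R) (ℳ : ι → Submodule A M) [SetLike.GradedSMul 𝒜 ℳ]
    (h𝒜 : ∀ d e, 𝒜 (d + e) ≤ 𝒜 d * 𝒜 e) {N : Submodule R M} {g : M} {i c d : ι}
    (hg : g ∈ ℳ i) (hgN : g ∈ N) {r : R} (hr : r ∈ 𝒜 (d + c)) :
    r • g ∈ span R ((ℳ (c + i) : Set M) ∩ N) := by
  refine Submodule.mul_induction_on (h𝒜 d c hr) (fun a _ b hb => ?_) fun x y hx hy => ?_
  · rw [mul_smul]
    exact smul_mem _ a (subset_span ⟨SetLike.GradedSMul.smul_mem hb hg, N.smul_mem b hgN⟩)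
  · rw [add_smul]
    exact add_mem hx hy

variable {ι A R M : Type*} [DecidableEq ι] [AddCommMonoid ι] [PartialOrder ι]
  [CanonicallyOrderedAdd ι] [IsRightCancelAdd ι] [CommSemiring A] [CommSemiring R]
  [Algebra A R] [AddCommMonoid M] [Module A M] [Module R M]
  (𝒜 : ι → Submodule A R) [GradedAlgebra 𝒜] (ℳ : ι → Submodule A M) [Decomposition ℳ]
  [SetLike.GradedSMul 𝒜 ℳ]

theorem decompose_smul_mem_span_inter (h𝒜 : ∀ d e, 𝒜 (d + e) ≤ 𝒜 d * 𝒜 e)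
    {N : Submodule R M} {g : M} {i m m' : ι} (hg : g ∈ ℳ i) (hgN : g ∈ N) (him : i ≤ m)
    (hmm' : m ≤ m') (r : R) :
    (decompose ℳ (r • g) m' : M) ∈ span R ((ℳ m : Set M) ∩ N) := by
  obtain ⟨c, rfl⟩ := le_iff_exists_add.mp him
  obtain ⟨d, rfl⟩ := le_iff_exists_add.mp hmm'
  induction r using Decomposition.inductionOn 𝒜 with
  | zero => simp
  | @homogeneous e r =>
    have hrg : (r : R) • g ∈ ℳ (e + i) := SetLike.GradedSMul.smul_mem r.2 hg
    by_cases he : e + i = i + c + d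
    · obtain rfl : e = d + c := add_right_cancel (he.trans (by abel))
      rw [decompose_of_mem_same ℳ (he ▸ hrg), add_comm i c]
      exact smul_mem_span_inter 𝒜 ℳ h𝒜 hg hgN r.2
    · rw [decompose_of_mem_ne ℳ hrg he]
      exact zero_mem _
  | add r r' hr hr' =>
    rw [add_smul, decompose_add, DirectSum.add_apply, coe_add]
    exact add_mem hr hr'

theorem Submodule.IsHomogeneous.exists_forall_mem_span_inter [IsDirectedOrder ι] [Nonempty ι]
    (h𝒜 : ∀ d e, 𝒜 (d + e) ≤ 𝒜 d * 𝒜 e) {N : Submodule R M} (hN : N.FG)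
    (hhom : N.IsHomogeneous ℳ) :
    ∃ t₀, ∀ m m', t₀ ≤ m → m ≤ m' → ∀ x ∈ ℳ m', x ∈ N → x ∈ span R ((ℳ m : Set M) ∩ N) := by
  obtain ⟨s, hs⟩ := Submodule.IsHomogeneous.exists_finset_span_eq ℳ hN hhom
  obtain ⟨t₀, ht₀⟩ := s.exists_le
  refine ⟨t₀, fun m m' ht₀m hmm' x hx hxN => ?_⟩
  suffices h : ∀ y ∈ N, ∀ r : R, (decompose ℳ (r • y) m' : M) ∈ span R ((ℳ m : Set M) ∩ N) by
    simpa [decompose_of_mem_same ℳ hx] using h x hxN 1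
  intro y hy
  rw [← hs] at hy
  induction hy using span_induction with
  | mem g hg =>
    obtain ⟨hgN, i, hi, hgi⟩ := hg
    exact decompose_smul_mem_span_inter 𝒜 ℳ h𝒜 hgi hgN ((ht₀ i hi).trans ht₀m) hmm'
  | zero => simp
  | add y z _ _ hy hz =>
    intro r
    rw [smul_add, decompose_add, DirectSum.add_apply, coe_add]
    exact add_mem (hy r) (hz r)
  | smul r' y _ hy =>
    intro r
    rw [smul_smul]
    exact hy (r * r')

end HomogeneousSubmodule

section AssociatedPrimes

variable {A R M : Type*} [CommRing A] [CommRing R] [Algebra A R] [AddCommGroup M] [Module A M]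
  [Module R M] [IsScalarTower A R M]

-- Localize at the image of `A ∖ p`, where `p = ann_A x`: an associated prime of the localization
-- containing `ann (x / 1)` pulls back to an associated prime of `M` lying over `p`.
theorem associatedPrimes_subset_image_comap [IsNoetherianRing A] [IsNoetherianRing R] :
    associatedPrimes A M ⊆ Ideal.comap (algebraMap A R) '' associatedPrimes R M := by
  intro p hp
  obtain ⟨hprime, x, rfl⟩ := isAssociatedPrime_iff.mp hp
  set S := Algebra.algebraMapSubmonoid R ((⊥ : Submodule A M).colon {x}).primeCompl
  let f := LocalizedModule.mkLinearMap S M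
  have hfx : f x ≠ 0 := by
    intro h
    obtain ⟨⟨_, a, ha, rfl⟩, hax⟩ := (IsLocalizedModule.eq_zero_iff S f).mp h
    rw [Submonoid.smul_def, algebraMap_smul] at hax
    exact ha (mem_colon_singleton.mpr ((Submodule.mem_bot A).mpr hax))
  obtain ⟨P, hP, hle⟩ :=
    exists_le_isAssociatedPrime_of_isNoetherianRing (Localization S) (f x) hfx
  refine ⟨_,
    Module.associatedPrimes.comap_mem_associatedPrimes_of_mem_associatedPrimes_of_isLocalizedModule_of_fg
      S f P hP (IsNoetherian.noetherian _), ?_⟩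
  ext a
  rw [Ideal.mem_comap, Ideal.mem_comap]
  constructor
  · intro ha
    by_contra h
    exact hP.isPrime.ne_top (Ideal.eq_top_of_isUnit_mem _ ha
      (IsLocalization.map_units (Localization S) (⟨algebraMap A R a, a, h, rfl⟩ : S)))
  · intro ha
    apply hle
    rw [mem_colon_singleton, Submodule.mem_bot, algebraMap_smul, ← map_smul, algebraMap_smul,
      mem_colon_singleton.mp ha, map_zero]

theorem mem_torsionBySet_image_algebraMap_iff {p : Set A} {x : M} :
    x ∈ torsionBySet R M (algebraMap A R '' p) ↔ ∀ a ∈ p, a • x = 0 := by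
  simp [mem_torsionBySet_iff]

theorem mem_associatedPrimes_iff_exists_mem_torsionBySet_notMem [IsNoetherianRing A]
    {p : Ideal A} (hp : p.IsPrime) (N : Submodule A M) :
    p ∈ associatedPrimes A N ↔
      ∃ x ∈ N, x ∈ torsionBySet R M (algebraMap A R '' p) ∧ x ∉ torsion' R M p.primeCompl := by
  simp only [AssociatedPrimes.mem_iff, isAssociatedPrime_iff, hp, true_and,
    mem_torsionBySet_image_algebraMap_iff, mem_torsion'_iff, Ideal.ext_iff, mem_colon_singleton,
    Submodule.mem_bot, Subtype.exists, SetLike.mk_smul_mk, mk_eq_zero, Submonoid.smul_def,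
    Ideal.mem_primeCompl_iff, SetLike.mem_coe, exists_prop]
  refine exists_congr fun x => and_congr_right fun _ => ⟨fun h => ⟨fun a => (h a).mp, ?_⟩, ?_⟩
  · rintro ⟨a, ha, hax⟩
    exact ha ((h a).mpr hax)
  · exact fun h a => ⟨h.1 a, fun hax => by_contra fun ha => h.2 ⟨a, ha, hax⟩⟩

theorem torsionBySet_image_algebraMap_isHomogeneous {ι : Type*} [DecidableEq ι]
    (ℳ : ι → Submodule A M) [Decomposition ℳ] (p : Set A) :
    (torsionBySet R M (algebraMap A R '' p)).IsHomogeneous ℳ := by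
  intro i x hx
  rw [mem_torsionBySet_image_algebraMap_iff] at hx ⊢
  intro a ha
  rw [← coe_smul, ← DirectSum.smul_apply, ← decompose_smul, hx a ha, decompose_zero,
    DirectSum.zero_apply, ZeroMemClass.coe_zero]

variable {ι : Type*} [DecidableEq ι] [AddCommMonoid ι] [PartialOrder ι]
  [CanonicallyOrderedAdd ι] [IsRightCancelAdd ι] [IsDirectedOrder ι] [Nonempty ι]
  [IsNoetherianRing A] [IsNoetherianRing R] [Module.Finite R M]
  (𝒜 : ι → Submodule A R) [GradedAlgebra 𝒜]
  (ℳ : ι → Submodule A M) [Decomposition ℳ] [SetLike.GradedSMul 𝒜 ℳ]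

theorem eventuallyConst_mem_associatedPrimes (h𝒜 : ∀ d e, 𝒜 (d + e) ≤ 𝒜 d * 𝒜 e)
    (p : Ideal A) : EventuallyConst (fun m => p ∈ associatedPrimes A (ℳ m)) atTop := by
  by_cases hp : p.IsPrime
  swap
  · exact (EventuallyConst.const False).congr
      (Eventually.of_forall fun m => propext (iff_of_false id fun h => hp h.isPrime))
  set H := torsionBySet R M (algebraMap A R '' p)
  set T := torsion' R M p.primeCompl
  obtain ⟨t₀, ht₀⟩ := Submodule.IsHomogeneous.exists_forall_mem_span_inter 𝒜 ℳ h𝒜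
    (IsNoetherian.noetherian H) (torsionBySet_image_algebraMap_isHomogeneous ℳ p)
  have hQ : EventuallyConst (fun m => ∀ x ∈ ℳ m, x ∈ H → x ∈ T) atTop :=
    eventuallyConst_atTop_of_forall_imp t₀ fun m m' ht₀m hmm' hm x hx hxH =>
      span_le.mpr (fun y hy => hm y hy.1 hy.2) (ht₀ m m' ht₀m hmm' x hx hxH)
  convert hQ.comp Not using 2 with m
  simp only [Function.comp_apply, not_forall, exists_prop]
  exact mem_associatedPrimes_iff_exists_mem_torsionBySet_notMem hp (ℳ m)

theorem eventuallyConst_associatedPrimes (h𝒜 : ∀ d e, 𝒜 (d + e) ≤ 𝒜 d * 𝒜 e) :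
    EventuallyConst (fun m => associatedPrimes A (ℳ m)) atTop :=
  eventuallyConst_set_of_finite ((associatedPrimes.finite R M).image _)
    (fun m => (associatedPrimes.subset_of_injective (ℳ m).injective_subtype).trans
      associatedPrimes_subset_image_comap)
    fun p _ => eventuallyConst_mem_associatedPrimes 𝒜 ℳ h𝒜 p

end AssociatedPrimes

theorem ass_bigraded_components_eventually_constant_general
    (A R : Type) [CommRing A] [CommRing R] [Algebra A R] [IsNoetherianRing A]
    (𝒜 : ℕ × ℕ → Submodule A R) [GradedAlgebra 𝒜]
    -- `R` is standard: generated as an `A`-algebra by finitely many elements of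
    -- degrees (1,0) and (0,1):
    (hstd : ∃ s : Finset R, (↑s : Set R) ⊆ (↑(𝒜 (1, 0)) ∪ ↑(𝒜 (0, 1)) : Set R) ∧
      Algebra.adjoin A (↑s : Set R) = ⊤)
    -- `M = ⊕_{(r,s)} ℳ (r,s)` is a finitely generated bigraded `R`-module:
    (M : Type) [AddCommGroup M] [Module A M] [Module R M] [IsScalarTower A R M]
    (ℳ : ℕ × ℕ → Submodule A M) [DirectSum.Decomposition ℳ] [SetLike.GradedSMul 𝒜 ℳ]
    [Module.Finite R M] :
    ∃ n₀ i₀ : ℕ, ∀ n i : ℕ, n₀ ≤ n → i₀ ≤ i →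
      associatedPrimes A (ℳ (n, i)) = associatedPrimes A (ℳ (n₀, i₀)) := by
  obtain ⟨s, hs, hgen⟩ := hstd
  have : Algebra.FiniteType A R := ⟨⟨s, hgen⟩⟩
  have : IsNoetherianRing R := Algebra.FiniteType.isNoetherianRing A R
  have h𝒜 : ∀ d e, 𝒜 (d + e) ≤ 𝒜 d * 𝒜 e := fun d e =>
    (GradedAlgebra.add_eq_mul_of_adjoin_eq_top 𝒜 (top_unique (hgen ▸ Algebra.adjoin_mono hs))
      d e).le
  obtain ⟨⟨n₀, i₀⟩, h⟩ := eventuallyConst_atTop.mp (eventuallyConst_associatedPrimes 𝒜 ℳ h𝒜)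
  exact ⟨n₀, i₀, fun n i hn hi => h (n, i) ⟨hn, hi⟩⟩

theorem ass_bigraded_components_eventually_constant
    (A R : Type) [CommRing A] [CommRing R] [Algebra A R] [IsNoetherianRing A]
    (𝒜 : ℕ × ℕ → Submodule A R) [GradedAlgebra 𝒜]
    -- `A = R_{(0,0)}` (the degree-(0,0) piece is the image of `A` in `R`):
    (hA : 𝒜 (0, 0) = 1)
    -- `R` is standard: generated as an `A`-algebra by finitely many elements of
    -- degrees (1,0) and (0,1):
    (hstd : ∃ s : Finset R, (↑s : Set R) ⊆ (↑(𝒜 (1, 0)) ∪ ↑(𝒜 (0, 1)) : Set R) ∧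
      Algebra.adjoin A (↑s : Set R) = ⊤)
    -- `M = ⊕_{(r,s)} ℳ (r,s)` is a finitely generated bigraded `R`-module:
    (M : Type) [AddCommGroup M] [Module A M] [Module R M] [IsScalarTower A R M]
    (ℳ : ℕ × ℕ → Submodule A M) [DirectSum.Decomposition ℳ] [SetLike.GradedSMul 𝒜 ℳ]
    [Module.Finite R M] :
    ∃ n₀ i₀ : ℕ, ∀ n i : ℕ, n₀ ≤ n → i₀ ≤ i →
      associatedPrimes A (ℳ (n, i)) = associatedPrimes A (ℳ (n₀, i₀)) :=
  ass_bigraded_components_eventually_constant_general A R 𝒜 hstd M ℳ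
end

section
/- Let R be a standard Noetherian ℕ₀²-graded algebra with A = R_{(0,0)} Noetherian, and let M = ⊕_{(i,j) ∈ ℕ₀²} M_{(i,j)} be a bigraded R-module (not necessarily finitely generated) such that Ass_A(M) is finite. Let L = Γ_{R_{++}}(M) = { x ∈ M : (R_{++})^k · x = 0 for some k ≥ 1 }, with its induced bigrading L = ⊕ L_{(i,j)}. If there exists l = (l₁, l₂) ∈ ℕ₀² such that Ass_A(L_{(n₁,n₂)}) = Ass_A(L_{(l₁,l₂)}) for all (n₁, n₂) with n₁ ≥ l₁ and n₂ ≥ l₂, then there exists h = (h₁, h₂) ∈ ℕ₀² such that Ass_A(M_{(n₁,n₂)}) = Ass_A(M_{(h₁,h₂)}) for all (n₁, n₂) with n₁ ≥ h₁ and n₂ ≥ h₂. -/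
/-!
Write `Γ = Γ_{R₊₊}(M)`. If `p = ann_A(y)` with `y ∈ M_n`, then either `a • y ∈ Γ` is nonzero for
some `a`, and then `p = ann_A(a • y)` with `a • y ∈ L_n`, or `A y ∩ Γ = 0`. Calling `G_n` the primes
realised in the second way, `Ass_A(M_n) = Ass_A(L_n) ∪ G_n`. Since `R₊₊` lies in the ideal generated
by the finitely many degree-`(1,0)` generators `tᵢ` of `R`, an element `z` with all `tᵢ • z ∈ Γ` is
itself in `Γ`; prime avoidance then gives an `i` with `ann_A(tᵢ • y) = p` and `A tᵢ y ∩ Γ = 0`.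
Hence `G_n ⊆ G_{n + (1,0)}`, and likewise for `(0,1)`: `G` is monotone with values in the finite
set `Ass_A(M)`, so it is eventually constant.
-/

/-- The `P`-torsion submodule Γ_P(M) = { x ∈ M : P^k • x = 0 for some k ≥ 1 } of an ideal
`P` of `R`, as a submodule of the `R`-module `M`. -/
noncomputable def idealTorsion (R : Type) [CommRing R] (M : Type) [AddCommGroup M] [Module R M]
    (P : Ideal R) : Submodule R M :=
  ⨆ k : ℕ, Submodule.torsionBySet R M ((P ^ (k + 1) : Ideal R) : Set R)

theorem Set.Finite.exists_forall_ge_eq_of_monotone {ι α : Type*} [Preorder ι] [Nonempty ι]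
    {G : ι → Set α} {S : Set α} (hS : S.Finite) (hG : Monotone G) (hGS : ∀ i, G i ⊆ S) :
    ∃ i₀, ∀ i, i₀ ≤ i → G i = G i₀ := by
  have hfin : (G '' Set.univ).Finite :=
    hS.finite_subsets.subset (by rintro _ ⟨i, -, rfl⟩; exact hGS i)
  obtain ⟨i₀, -, hmax⟩ := Set.Finite.exists_maximalFor' G Set.univ hfin Set.univ_nonempty
  exact ⟨i₀, fun i hi => le_antisymm (hmax trivial (hG hi)) (hG hi)⟩

theorem Ideal.IsHomogeneous.mem_of_degree_notMem {ι A R : Type*} [DecidableEq ι] [AddMonoid ι]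
    [CommRing A] [CommRing R] [Algebra A R] {𝒜 : ι → Submodule A R} [GradedAlgebra 𝒜]
    {I : Ideal R} (hI : I.IsHomogeneous 𝒜) {s : Set R} (hs : Algebra.adjoin A s = ⊤)
    {N : AddSubmonoid ι} (hsN : ∀ x ∈ s, x ∈ I ∨ ∃ d ∈ N, x ∈ 𝒜 d)
    {i : ι} (hi : i ∉ N) {x : R} (hx : x ∈ 𝒜 i) : x ∈ I := by
  have hmonomial : ∀ m ∈ Submonoid.closure s, m ∈ I ∨ ∃ d ∈ N, m ∈ 𝒜 d := by
    intro m hm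
    induction hm using Submonoid.closure_induction with
    | mem x hx => exact hsN x hx
    | one => exact Or.inr ⟨0, N.zero_mem, SetLike.one_mem_graded 𝒜⟩
    | mul x y _ _ hx hy =>
      rcases hx with hx | ⟨d, hd, hxd⟩
      · exact Or.inl (I.mul_mem_right y hx)
      rcases hy with hy | ⟨e, he, hye⟩
      · exact Or.inl (I.mul_mem_left x hy)
      · exact Or.inr ⟨d + e, N.add_mem hd he, SetLike.mul_mem_graded hxd hye⟩
  have hproj : Submodule.span A (Submonoid.closure s : Set R) ≤
      (I.restrictScalars A).comap (GradedAlgebra.proj 𝒜 i) := by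
    refine Submodule.span_le.2 fun m hm => ?_
    rcases hmonomial m hm with hmI | ⟨d, hd, hmd⟩
    · exact hI i hmI
    · have hdi : d ≠ i := fun h => hi (h ▸ hd)
      simp [DirectSum.decompose_of_mem_ne 𝒜 hmd hdi]
  have hx_span : x ∈ Submodule.span A (Submonoid.closure s : Set R) := by
    rw [← Algebra.adjoin_eq_span, hs]
    exact Submodule.mem_top
  simpa [DirectSum.decompose_of_mem_same 𝒜 hx] using hproj hx_span

section IdealTorsion

variable {R M : Type} [CommRing R] [AddCommGroup M] [Module R M] {P : Ideal R}

theorem mem_idealTorsion_iff {x : M} :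
    x ∈ idealTorsion R M P ↔ ∃ k, P ^ (k + 1) ≤ Ideal.torsionOf R M x := by
  have hmono : Monotone fun k : ℕ => Submodule.torsionBySet R M ((P ^ (k + 1) : Ideal R) : Set R) :=
    fun i j hij => Submodule.torsionBySet_le_torsionBySet_of_subset
      (Ideal.pow_le_pow_right (by omega))
  simp only [idealTorsion, Submodule.mem_iSup_of_directed _ hmono.directed_le,
    Submodule.mem_torsionBySet_iff, SetLike.le_def, Ideal.mem_torsionOf_iff, Subtype.forall,
    SetLike.mem_coe]

theorem mem_idealTorsion_of_forall_smul_mem {T : Set R} (hT : T.Finite) (hPT : P ≤ Ideal.span T)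
    {x : M} (hx : ∀ t ∈ T, t • x ∈ idealTorsion R M P) : x ∈ idealTorsion R M P := by
  obtain ⟨k, hk⟩ : ∃ k, ∀ t ∈ T, P ^ (k + 1) ≤ Ideal.torsionOf R M (t • x) := by
    refine ((Filter.eventually_all_finite hT).2 fun t ht => ?_).exists (f := Filter.atTop)
    obtain ⟨k, hk⟩ := mem_idealTorsion_iff.1 (hx t ht)
    exact Filter.eventually_atTop.2 ⟨k, fun j hj => (Ideal.pow_le_pow_right (by omega)).trans hk⟩
  have hcolon : P ≤ (Ideal.torsionOf R M x).colon (P ^ (k + 1) : Ideal R) := by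
    refine hPT.trans (Ideal.span_le.2 fun t ht => Submodule.mem_colon.2 fun u hu => ?_)
    simpa [Ideal.mem_torsionOf_iff, mul_comm t u, mul_smul] using hk t ht hu
  refine mem_idealTorsion_iff.2 ⟨k + 1, ?_⟩
  rw [pow_succ', Ideal.mul_le]
  intro r hr u hu
  exact Submodule.mem_colon.1 (hcolon hr) u hu

end IdealTorsion

theorem mem_associatedPrimes_submodule_iff {A M : Type*} [CommRing A] [IsNoetherianRing A]
    [AddCommGroup M] [Module A M] {N : Submodule A M} {p : Ideal A} :
    p ∈ associatedPrimes A N ↔ p.IsPrime ∧ ∃ y ∈ N, Ideal.torsionOf A M y = p := by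
  have htorsion : ∀ y : N, Submodule.colon ⊥ {y} = Ideal.torsionOf A M y := fun y => by
    ext a
    simp [Submodule.mem_colon_singleton, Ideal.mem_torsionOf_iff, ← Submodule.coe_eq_zero]
  simp only [AssociatedPrimes.mem_iff, isAssociatedPrime_iff, htorsion, Subtype.exists,
    exists_prop, eq_comm]

section AssociatedPrimesAvoiding

variable {A R M : Type*} [CommRing A] [CommRing R] [AddCommGroup M] [Module A M] [Module R M]

def associatedPrimesAvoiding (Γ : Submodule R M) (N : Submodule A M) : Set (Ideal A) :=
  {p | p.IsPrime ∧ ∃ y ∈ N, Ideal.torsionOf A M y = p ∧ ∀ a : A, a • y ∈ Γ → a • y = 0}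

variable {Γ : Submodule R M}

theorem associatedPrimesAvoiding_subset [IsNoetherianRing A] (N : Submodule A M) :
    associatedPrimesAvoiding Γ N ⊆ associatedPrimes A N := by
  rintro p ⟨hp, y, hyN, hy, -⟩
  exact mem_associatedPrimes_submodule_iff.2 ⟨hp, y, hyN, hy⟩

variable [Algebra A R] [IsScalarTower A R M]

theorem associatedPrimes_eq_union_associatedPrimesAvoiding [IsNoetherianRing A]
    (Γ : Submodule R M) (N : Submodule A M) :
    associatedPrimes A N =
      associatedPrimes A ↥(Γ.restrictScalars A ⊓ N) ∪ associatedPrimesAvoiding Γ N := by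
  refine subset_antisymm (fun p hp => ?_) (Set.union_subset
    (associatedPrimes.subset_of_injective (Submodule.inclusion_injective inf_le_right))
    (associatedPrimesAvoiding_subset N))
  obtain ⟨hprime, y, hyN, rfl⟩ := mem_associatedPrimes_submodule_iff.1 hp
  by_cases havoid : ∀ a : A, a • y ∈ Γ → a • y = 0
  · exact Or.inr ⟨hprime, y, hyN, rfl, havoid⟩
  push Not at havoid
  obtain ⟨a, haΓ, ha⟩ := havoid
  refine Or.inl (mem_associatedPrimes_submodule_iff.2 ⟨hprime, a • y, ⟨haΓ, N.smul_mem a hyN⟩, ?_⟩)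
  ext b
  rw [Ideal.mem_torsionOf_iff, smul_smul, ← Ideal.mem_torsionOf_iff]
  exact ⟨fun h => (hprime.mem_or_mem h).resolve_right ha, fun h => Ideal.mul_mem_right a _ h⟩

theorem associatedPrimesAvoiding_subset_of_smul_mem {T : Set R} (hT : T.Finite)
    (hΓ : ∀ z : M, (∀ t ∈ T, t • z ∈ Γ) → z ∈ Γ) {N N' : Submodule A M}
    (hNN' : ∀ t ∈ T, ∀ y ∈ N, t • y ∈ N') :
    associatedPrimesAvoiding Γ N ⊆ associatedPrimesAvoiding Γ N' := by
  rintro p ⟨hp, y, hyN, rfl, havoid⟩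
  -- prime avoidance for the finitely many ideals `(Γ : t • y)`, whose intersection is `(Γ : y)`
  obtain ⟨t, htT, ht⟩ : ∃ t ∈ hT.toFinset,
      (Γ.restrictScalars A).colon {t • y} ≤ Ideal.torsionOf A M y := by
    refine hp.inf_le'.1 fun b hb => havoid b (hΓ _ fun t htT => ?_)
    rw [smul_comm]
    exact Submodule.mem_colon_singleton.1 (Submodule.mem_finsetInf.1 hb t (hT.mem_toFinset.2 htT))
  have hann : ∀ a : A, a • t • y ∈ Γ → a • y = 0 := fun a ha =>
    ht (Submodule.mem_colon_singleton.2 ha)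
  refine ⟨hp, t • y, hNN' t (hT.mem_toFinset.1 htT) y hyN, ?_, fun a ha => ?_⟩
  · ext a
    simp only [Ideal.mem_torsionOf_iff]
    refine ⟨fun h => hann a (h ▸ Γ.zero_mem), fun h => ?_⟩
    rw [smul_comm, h, smul_zero]
  · rw [smul_comm, hann a ha, smul_zero]

end AssociatedPrimesAvoiding

theorem span_graded_one_one_le_span_generators {A R : Type*} [CommRing A] [CommRing R]
    [Algebra A R] {𝒜 : ℕ × ℕ → Submodule A R} [GradedAlgebra 𝒜] {s : Set R}
    (hs_deg : s ⊆ ↑(𝒜 (1, 0)) ∪ ↑(𝒜 (0, 1))) (hs_gen : Algebra.adjoin A s = ⊤) {e : ℕ × ℕ}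
    (he : e = (1, 0) ∨ e = (0, 1)) :
    Ideal.span (𝒜 (1, 1) : Set R) ≤ Ideal.span (s ∩ 𝒜 e) := by
  have hI : (Ideal.span (s ∩ 𝒜 e)).IsHomogeneous 𝒜 :=
    Ideal.homogeneous_span 𝒜 _ fun x hx => ⟨e, hx.2⟩
  refine Ideal.span_le.2 fun x hx => ?_
  -- the generators not in `Ideal.span (s ∩ 𝒜 e)` only produce degrees with vanishing
  -- `e`-coordinate, which `(1, 1)` does not have
  rcases he with rfl | rfl
  · refine hI.mem_of_degree_notMem hs_gen (N := (⊥ : AddSubmonoid ℕ).prod ⊤)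
      (fun y hy => ?_) (by simp [AddSubmonoid.mem_prod]) hx
    rcases hs_deg hy with h | h
    · exact Or.inl (Ideal.subset_span ⟨hy, h⟩)
    · exact Or.inr ⟨(0, 1), by simp [AddSubmonoid.mem_prod], h⟩
  · refine hI.mem_of_degree_notMem hs_gen (N := (⊤ : AddSubmonoid ℕ).prod ⊥)
      (fun y hy => ?_) (by simp [AddSubmonoid.mem_prod]) hx
    rcases hs_deg hy with h | h
    · exact Or.inr ⟨(1, 0), by simp [AddSubmonoid.mem_prod], h⟩
    · exact Or.inl (Ideal.subset_span ⟨hy, h⟩)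

theorem monotone_associatedPrimesAvoiding_idealTorsion {A R M : Type} [CommRing A] [CommRing R]
    [Algebra A R] {𝒜 : ℕ × ℕ → Submodule A R} [GradedAlgebra 𝒜] [AddCommGroup M] [Module A M]
    [Module R M] [IsScalarTower A R M] (ℳ : ℕ × ℕ → Submodule A M) [SetLike.GradedSMul 𝒜 ℳ]
    {s : Finset R} (hs_deg : (s : Set R) ⊆ ↑(𝒜 (1, 0)) ∪ ↑(𝒜 (0, 1)))
    (hs_gen : Algebra.adjoin A (s : Set R) = ⊤) :
    Monotone fun n => associatedPrimesAvoiding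
      (idealTorsion R M (Ideal.span (𝒜 (1, 1) : Set R))) (ℳ n) := by
  set Γ := idealTorsion R M (Ideal.span (𝒜 (1, 1) : Set R))
  have hstep : ∀ e n, e = (1, 0) ∨ e = (0, 1) →
      associatedPrimesAvoiding Γ (ℳ n) ⊆ associatedPrimesAvoiding Γ (ℳ (e + n)) := by
    intro e n he
    have hT : ((s : Set R) ∩ 𝒜 e).Finite := s.finite_toSet.inter_of_left _
    exact associatedPrimesAvoiding_subset_of_smul_mem hT
      (fun z hz => mem_idealTorsion_of_forall_smul_mem hT
        (span_graded_one_one_le_span_generators hs_deg hs_gen he) hz)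
      fun t ht y hy => SetLike.GradedSMul.smul_mem ht.2 hy
  refine monotone_prod_iff.2 ⟨fun i => monotone_nat_of_le_succ fun j => ?_,
    fun j => monotone_nat_of_le_succ fun i => ?_⟩
  · simpa [add_comm] using hstep (0, 1) (i, j) (Or.inr rfl)
  · simpa [add_comm] using hstep (1, 0) (i, j) (Or.inl rfl)

theorem ass_bigraded_components_eventually_constant_of_torsion_general
    (A R : Type) [CommRing A] [CommRing R] [Algebra A R] [IsNoetherianRing A]
    (𝒜 : ℕ × ℕ → Submodule A R) [GradedAlgebra 𝒜]
    -- `R` is standard: generated as an `A`-algebra by finitely many elements of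
    -- degrees (1,0) and (0,1):
    (hstd : ∃ s : Finset R, (↑s : Set R) ⊆ (↑(𝒜 (1, 0)) ∪ ↑(𝒜 (0, 1)) : Set R) ∧
      Algebra.adjoin A (↑s : Set R) = ⊤)
    -- `M = ⊕_{(i,j)} ℳ (i,j)` is a bigraded `R`-module (not necessarily finitely generated):
    (M : Type) [AddCommGroup M] [Module A M] [Module R M] [IsScalarTower A R M]
    (ℳ : ℕ × ℕ → Submodule A M) [SetLike.GradedSMul 𝒜 ℳ]
    -- `Ass_A(M)` is finite:
    (hAssFin : (associatedPrimes A M).Finite)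
    -- the component of bidegree `(i,j)` of `L = Γ_{R₊₊}(M)`, where `R₊₊` is the ideal of `R`
    -- generated by `R_{(1,1)}`:
    (L : ℕ × ℕ → Submodule A M)
    (hL : ∀ d : ℕ × ℕ, L d =
      (Submodule.restrictScalars A
        (idealTorsion R M (Ideal.span (↑(𝒜 (1, 1)) : Set R)))) ⊓ ℳ d)
    -- hypothesis (1): the associated primes of the components of `L` stabilize:
    (hstab : ∃ l : ℕ × ℕ, ∀ n : ℕ × ℕ, l.1 ≤ n.1 → l.2 ≤ n.2 →
      associatedPrimes A (L n) = associatedPrimes A (L l)) :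
    -- conclusion (2): the associated primes of the components of `M` stabilize:
    ∃ h : ℕ × ℕ, ∀ n : ℕ × ℕ, h.1 ≤ n.1 → h.2 ≤ n.2 →
      associatedPrimes A (ℳ n) = associatedPrimes A (ℳ h) := by
  obtain ⟨s, hs_deg, hs_gen⟩ := hstd
  obtain ⟨l, hl⟩ := hstab
  set Γ := idealTorsion R M (Ideal.span (𝒜 (1, 1) : Set R))
  obtain ⟨g, hg⟩ := hAssFin.exists_forall_ge_eq_of_monotone
    (monotone_associatedPrimesAvoiding_idealTorsion ℳ hs_deg hs_gen)
    fun n => (associatedPrimesAvoiding_subset _).trans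
      (associatedPrimes.subset_of_injective (ℳ n).injective_subtype)
  have hunion : ∀ n, l ⊔ g ≤ n →
      associatedPrimes A (ℳ n) = associatedPrimes A (L l) ∪ associatedPrimesAvoiding Γ (ℳ g) := by
    intro n hn
    obtain ⟨hl₁, hl₂⟩ := le_sup_left.trans hn
    rw [associatedPrimes_eq_union_associatedPrimesAvoiding Γ (ℳ n), ← hL, hl n hl₁ hl₂,
      hg n (le_sup_right.trans hn)]
  exact ⟨l ⊔ g, fun n h₁ h₂ => by rw [hunion n ⟨h₁, h₂⟩, hunion _ le_rfl]⟩

theorem ass_bigraded_components_eventually_constant_of_torsion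
    (A R : Type) [CommRing A] [CommRing R] [Algebra A R] [IsNoetherianRing A]
    (𝒜 : ℕ × ℕ → Submodule A R) [GradedAlgebra 𝒜]
    -- `A = R_{(0,0)}` (the degree-(0,0) piece is the image of `A` in `R`):
    (hA : 𝒜 (0, 0) = 1)
    -- `R` is standard: generated as an `A`-algebra by finitely many elements of
    -- degrees (1,0) and (0,1):
    (hstd : ∃ s : Finset R, (↑s : Set R) ⊆ (↑(𝒜 (1, 0)) ∪ ↑(𝒜 (0, 1)) : Set R) ∧
      Algebra.adjoin A (↑s : Set R) = ⊤)
    -- `M = ⊕_{(i,j)} ℳ (i,j)` is a bigraded `R`-module (not necessarily finitely generated):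
    (M : Type) [AddCommGroup M] [Module A M] [Module R M] [IsScalarTower A R M]
    (ℳ : ℕ × ℕ → Submodule A M) [DirectSum.Decomposition ℳ] [SetLike.GradedSMul 𝒜 ℳ]
    -- `Ass_A(M)` is finite:
    (hAssFin : (associatedPrimes A M).Finite)
    -- the component of bidegree `(i,j)` of `L = Γ_{R₊₊}(M)`, where `R₊₊` is the ideal of `R`
    -- generated by `R_{(1,1)}`:
    (L : ℕ × ℕ → Submodule A M)
    (hL : ∀ d : ℕ × ℕ, L d =
      (Submodule.restrictScalars A
        (idealTorsion R M (Ideal.span (↑(𝒜 (1, 1)) : Set R)))) ⊓ ℳ d)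
    -- hypothesis (1): the associated primes of the components of `L` stabilize:
    (hstab : ∃ l : ℕ × ℕ, ∀ n : ℕ × ℕ, l.1 ≤ n.1 → l.2 ≤ n.2 →
      associatedPrimes A (L n) = associatedPrimes A (L l)) :
    -- conclusion (2): the associated primes of the components of `M` stabilize:
    ∃ h : ℕ × ℕ, ∀ n : ℕ × ℕ, h.1 ≤ n.1 → h.2 ≤ n.2 →
      associatedPrimes A (ℳ n) = associatedPrimes A (ℳ h) :=
  ass_bigraded_components_eventually_constant_of_torsion_general A R 𝒜 hstd M ℳ hAssFin L hL hstab
end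

section
/- Let R be a standard Noetherian ℕ₀²-graded algebra whose degree-(0,0) part A = R_{(0,0)} is a Noetherian local ring, and let M be a finitely generated bigraded R-module. Then there exist r₀, s₀ ≥ 0 such that the bidegree-(r,s) component of the R_{++}-torsion submodule Γ_{R_{++}}(M) = { x ∈ M : (R_{++})^k · x = 0 for some k ≥ 1 } is zero for all r ≥ r₀ and s ≥ s₀. -/
open DirectSum Filter

section GradedPieces

variable {ι A R : Type} [AddMonoid ι] [CommSemiring A] [Semiring R] [Algebra A R]
  (𝒜 : ι → Submodule A R) [SetLike.GradedMonoid 𝒜]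

theorem Submodule.graded_mul_le (i j : ι) : 𝒜 i * 𝒜 j ≤ 𝒜 (i + j) :=
  Submodule.mul_le.mpr fun _ hx _ hy => SetLike.mul_mem_graded hx hy

theorem Submodule.graded_pow_le (i : ι) : ∀ n : ℕ, 𝒜 i ^ n ≤ 𝒜 (n • i)
  | 0 => by simpa [Submodule.one_le] using SetLike.one_mem_graded 𝒜
  | n + 1 => by
    rw [pow_succ, succ_nsmul]
    exact (mul_le_mul' (Submodule.graded_pow_le i n) le_rfl).trans
      (Submodule.graded_mul_le 𝒜 _ _)

end GradedPieces

section Bigraded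

variable {A R : Type} [CommSemiring A] [CommSemiring R] [Algebra A R]
  (𝒜 : ℕ × ℕ → Submodule A R) [GradedAlgebra 𝒜]

theorem bigraded_pow_mul_pow_le (c d : ℕ) : 𝒜 (1, 0) ^ c * 𝒜 (0, 1) ^ d ≤ 𝒜 (c, d) := by
  refine (mul_le_mul' (Submodule.graded_pow_le 𝒜 _ c)
    (Submodule.graded_pow_le 𝒜 _ d)).trans ?_
  have hdeg : c • ((1, 0) : ℕ × ℕ) + d • (0, 1) = (c, d) := by ext <;> simp
  exact hdeg ▸ Submodule.graded_mul_le 𝒜 _ _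

theorem bigraded_eq_pow_mul_pow
    (hgen : Algebra.adjoin A ((𝒜 (1, 0) : Set R) ∪ 𝒜 (0, 1)) = ⊤) (c d : ℕ) :
    𝒜 (c, d) = 𝒜 (1, 0) ^ c * 𝒜 (0, 1) ^ d := by
  classical
  refine le_antisymm (fun x hx => ?_) (bigraded_pow_mul_pow_le 𝒜 c d)
  have hmonomial : ∀ y ∈ Submonoid.closure ((𝒜 (1, 0) : Set R) ∪ 𝒜 (0, 1)),
      ∃ i j : ℕ, y ∈ 𝒜 (1, 0) ^ i * 𝒜 (0, 1) ^ j := by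
    intro y hy
    induction hy using Submonoid.closure_induction with
    | mem y hy =>
      rcases hy with hy | hy
      · exact ⟨1, 0, by simpa using hy⟩
      · exact ⟨0, 1, by simpa using hy⟩
    | one => exact ⟨0, 0, by simpa using Submodule.mem_one.mpr ⟨1, map_one _⟩⟩
    | mul y z _ _ hy hz =>
      obtain ⟨i, j, hy⟩ := hy
      obtain ⟨k, l, hz⟩ := hz
      refine ⟨i + k, j + l, ?_⟩
      have := Submodule.mul_mem_mul hy hz
      convert this using 1
      ring
  have hspan :
      x ∈ Submodule.span A (Submonoid.closure ((𝒜 (1, 0) : Set R) ∪ 𝒜 (0, 1)) : Set R) := by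
    rw [← Algebra.adjoin_eq_span, hgen]
    trivial
  rw [← decompose_of_mem_same 𝒜 hx]
  clear hx
  induction hspan using Submodule.span_induction with
  | mem y hy =>
    obtain ⟨i, j, hy⟩ := hmonomial y hy
    by_cases hij : (i, j) = (c, d)
    · obtain ⟨rfl, rfl⟩ := Prod.mk.inj hij
      rwa [decompose_of_mem_same 𝒜 (bigraded_pow_mul_pow_le 𝒜 _ _ hy)]
    · rw [decompose_of_mem_ne 𝒜 (bigraded_pow_mul_pow_le 𝒜 i j hy) hij]
      exact zero_mem _
  | zero => simp
  | add y z _ _ hy hz =>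
    rw [decompose_add, DirectSum.add_apply, Submodule.coe_add]
    exact add_mem hy hz
  | smul a y _ hy =>
    rw [decompose_smul, DFinsupp.smul_apply, Submodule.coe_smul]
    exact Submodule.smul_mem _ a hy

theorem bigraded_succ_succ_eq_mul
    (hgen : Algebra.adjoin A ((𝒜 (1, 0) : Set R) ∪ 𝒜 (0, 1)) = ⊤) (c d : ℕ) :
    𝒜 (c + 1, d + 1) = 𝒜 (1, 1) * 𝒜 (c, d) := by
  rw [bigraded_eq_pow_mul_pow 𝒜 hgen (c + 1) (d + 1), bigraded_eq_pow_mul_pow 𝒜 hgen 1 1,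
    bigraded_eq_pow_mul_pow 𝒜 hgen c d]
  ring

theorem bigraded_le_span_pow
    (hgen : Algebra.adjoin A ((𝒜 (1, 0) : Set R) ∪ 𝒜 (0, 1)) = ⊤) (c d : ℕ) :
    ∀ n : ℕ, 𝒜 (c + n, d + n) ≤ ((Ideal.span (𝒜 (1, 1) : Set R)) ^ n).restrictScalars A
  | 0 => by simp [Ideal.one_eq_top]
  | n + 1 => by
    rw [← add_assoc, ← add_assoc, bigraded_succ_succ_eq_mul 𝒜 hgen, pow_succ']
    exact Submodule.mul_le.mpr fun x hx y hy =>
      Ideal.mul_mem_mul (Ideal.subset_span hx) (bigraded_le_span_pow hgen c d n hy)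

end Bigraded

theorem decompose_smul_eq_zero_of_forall_add_eq {ι A R M : Type} [AddMonoid ι] [DecidableEq ι]
    [CommSemiring A] [Semiring R] [Algebra A R] [AddCommMonoid M] [Module A M] [Module R M]
    (𝒜 : ι → Submodule A R) (ℳ : ι → Submodule A M) [Decomposition ℳ] [SetLike.GradedSMul 𝒜 ℳ]
    {p : R} {i j : ι} (hp : p ∈ 𝒜 j) (m : M)
    (hm : ∀ k, j + k = i → (decompose ℳ m k : M) = 0) :
    (decompose ℳ (p • m) i : M) = 0 := by
  classical
  rw [← sum_support_decompose ℳ m, Finset.smul_sum, decompose_sum, DFinsupp.finsetSum_apply,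
    Submodule.coe_sum]
  refine Finset.sum_eq_zero fun k _ => ?_
  by_cases hk : j + k = i
  · rw [hm k hk, smul_zero, decompose_zero, DirectSum.zero_apply, ZeroMemClass.coe_zero]
  · exact decompose_of_mem_ne ℳ (SetLike.GradedSMul.smul_mem hp (decompose ℳ m k).2) hk

theorem eventually_forall_mem_span_decompose_eq_zero {ι A R M : Type} [DecidableEq ι]
    [CommSemiring A] [Semiring R] [AddCommMonoid M] [Module A M] [Module R M]
    (ℳ : ι → Submodule A M) [Decomposition ℳ] {l : Filter ι} (T : Finset M)
    (hT : ∀ t ∈ T, ∀ᶠ i in l, ∀ g : R, (decompose ℳ (g • t) i : M) = 0) :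
    ∀ᶠ i in l, ∀ x ∈ Submodule.span R (T : Set M), (decompose ℳ x i : M) = 0 := by
  filter_upwards [(eventually_all_finset T).mpr hT] with i hi x hx
  obtain ⟨f, -, rfl⟩ := Submodule.mem_span_finset.mp hx
  rw [decompose_sum, DFinsupp.finsetSum_apply, Submodule.coe_sum]
  exact Finset.sum_eq_zero fun t ht => hi t ht (f t)

theorem eventually_decompose_smul_eq_zero {A R M : Type} [CommSemiring A] [CommSemiring R]
    [Algebra A R] [AddCommMonoid M] [Module A M] [Module R M]
    (𝒜 : ℕ × ℕ → Submodule A R) [GradedAlgebra 𝒜] (ℳ : ℕ × ℕ → Submodule A M)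
    [Decomposition ℳ] [SetLike.GradedSMul 𝒜 ℳ]
    (hgen : Algebra.adjoin A ((𝒜 (1, 0) : Set R) ∪ 𝒜 (0, 1)) = ⊤) {n : ℕ} {t : M}
    (ht : ∀ p ∈ Ideal.span (𝒜 (1, 1) : Set R) ^ n, p • t = 0) :
    ∀ᶠ i in atTop, ∀ g : R, (decompose ℳ (g • t) i : M) = 0 := by
  classical
  obtain ⟨b, hb⟩ := (decompose ℳ t).support.bddAbove
  filter_upwards [eventually_ge_atTop (b + (n, n))] with i hi g
  rw [← sum_support_decompose 𝒜 g, Finset.sum_smul, decompose_sum, DFinsupp.finsetSum_apply,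
    Submodule.coe_sum]
  refine Finset.sum_eq_zero fun j _ => ?_
  by_cases hj : n ≤ j.1 ∧ n ≤ j.2
  · have hgj : (decompose 𝒜 g j : R) ∈ Ideal.span (𝒜 (1, 1) : Set R) ^ n := by
      refine bigraded_le_span_pow 𝒜 hgen (j.1 - n) (j.2 - n) n ?_
      rw [Nat.sub_add_cancel hj.1, Nat.sub_add_cancel hj.2]
      exact (decompose 𝒜 g j).2
    rw [ht _ hgj, decompose_zero, DirectSum.zero_apply, ZeroMemClass.coe_zero]
  · refine decompose_smul_eq_zero_of_forall_add_eq 𝒜 ℳ (decompose 𝒜 g j).2 t fun k hk => ?_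
    by_contra hne
    have hkb : k ≤ b := hb (DFinsupp.mem_support_iff.mpr (by simpa using hne))
    rw [← hk, Prod.le_def] at hi
    rw [Prod.le_def] at hkb
    simp only [Prod.fst_add, Prod.snd_add] at hi
    omega

theorem exists_pow_smul_eq_zero_of_mem_idealTorsion {R M : Type} [CommRing R] [AddCommGroup M]
    [Module R M] {P : Ideal R} {t : M} (ht : t ∈ idealTorsion R M P) :
    ∃ n : ℕ, ∀ p ∈ P ^ n, p • t = 0 := by
  have hmono : Monotone fun k : ℕ => Submodule.torsionBySet R M ((P ^ (k + 1) : Ideal R) : Set R) :=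
    fun k l hkl => Submodule.torsionBySet_le_torsionBySet_of_subset
      (Ideal.pow_le_pow_right (by omega))
  obtain ⟨k, hk⟩ := (Submodule.mem_iSup_of_directed _ hmono.directed_le).mp ht
  exact ⟨k + 1, fun p hp => (Submodule.mem_torsionBySet_iff _ t).mp hk ⟨p, hp⟩⟩

theorem torsion_components_eventually_vanish_general
    (A R : Type) [CommRing A] [CommRing R] [Algebra A R] [IsNoetherianRing A]
    (𝒜 : ℕ × ℕ → Submodule A R) [GradedAlgebra 𝒜]
    -- `R` is standard: generated as an `A`-algebra by finitely many elements of
    -- degrees (1,0) and (0,1):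
    (hstd : ∃ s : Finset R, (↑s : Set R) ⊆ (↑(𝒜 (1, 0)) ∪ ↑(𝒜 (0, 1)) : Set R) ∧
      Algebra.adjoin A (↑s : Set R) = ⊤)
    -- `M = ⊕_{(r,s)} ℳ (r,s)` is a finitely generated bigraded `R`-module:
    (M : Type) [AddCommGroup M] [Module A M] [Module R M] [IsScalarTower A R M]
    (ℳ : ℕ × ℕ → Submodule A M) [DirectSum.Decomposition ℳ] [SetLike.GradedSMul 𝒜 ℳ]
    [Module.Finite R M] :
    -- the bidegree-(r,s) component of `Γ_{R₊₊}(M)` vanishes for all r ≥ r₀, s ≥ s₀,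
    -- where `R₊₊` is the ideal of `R` generated by `R_{(1,1)}`:
    ∃ r₀ s₀ : ℕ, ∀ r s : ℕ, r₀ ≤ r → s₀ ≤ s →
      (Submodule.restrictScalars A
        (idealTorsion R M (Ideal.span (↑(𝒜 (1, 1)) : Set R)))) ⊓ ℳ (r, s) = ⊥ := by
  obtain ⟨s, hs, hadjoin⟩ := hstd
  have : Algebra.FiniteType A R := ⟨⟨s, hadjoin⟩⟩
  have : IsNoetherianRing R := Algebra.FiniteType.isNoetherianRing A R
  have hgen : Algebra.adjoin A ((𝒜 (1, 0) : Set R) ∪ 𝒜 (0, 1)) = ⊤ :=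
    top_le_iff.mp (hadjoin ▸ Algebra.adjoin_mono hs)
  obtain ⟨T, hT⟩ := IsNoetherian.noetherian (idealTorsion R M (Ideal.span (𝒜 (1, 1) : Set R)))
  have hvanish : ∀ᶠ i in atTop, ∀ x ∈ idealTorsion R M (Ideal.span (𝒜 (1, 1) : Set R)),
      (decompose ℳ x i : M) = 0 := by
    rw [← hT]
    refine eventually_forall_mem_span_decompose_eq_zero ℳ T fun t ht => ?_
    obtain ⟨n, hn⟩ := exists_pow_smul_eq_zero_of_mem_idealTorsion (hT ▸ Submodule.subset_span ht)
    exact eventually_decompose_smul_eq_zero 𝒜 ℳ hgen hn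
  obtain ⟨⟨r₀, s₀⟩, hrs⟩ := eventually_atTop.mp hvanish
  refine ⟨r₀, s₀, fun r s hr hs => eq_bot_iff.mpr fun x ⟨hxΓ, hxrs⟩ => ?_⟩
  rw [Submodule.mem_bot, ← decompose_of_mem_same ℳ hxrs]
  exact hrs (r, s) ⟨hr, hs⟩ x hxΓ

theorem torsion_components_eventually_vanish
    (A R : Type) [CommRing A] [CommRing R] [Algebra A R] [IsNoetherianRing A] [IsLocalRing A]
    (𝒜 : ℕ × ℕ → Submodule A R) [GradedAlgebra 𝒜]
    -- `A = R_{(0,0)}` (the degree-(0,0) piece is the image of `A` in `R`):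
    (hA : 𝒜 (0, 0) = 1)
    -- `R` is standard: generated as an `A`-algebra by finitely many elements of
    -- degrees (1,0) and (0,1):
    (hstd : ∃ s : Finset R, (↑s : Set R) ⊆ (↑(𝒜 (1, 0)) ∪ ↑(𝒜 (0, 1)) : Set R) ∧
      Algebra.adjoin A (↑s : Set R) = ⊤)
    -- `M = ⊕_{(r,s)} ℳ (r,s)` is a finitely generated bigraded `R`-module:
    (M : Type) [AddCommGroup M] [Module A M] [Module R M] [IsScalarTower A R M]
    (ℳ : ℕ × ℕ → Submodule A M) [DirectSum.Decomposition ℳ] [SetLike.GradedSMul 𝒜 ℳ]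
    [Module.Finite R M] :
    -- the bidegree-(r,s) component of `Γ_{R₊₊}(M)` vanishes for all r ≥ r₀, s ≥ s₀,
    -- where `R₊₊` is the ideal of `R` generated by `R_{(1,1)}`:
    ∃ r₀ s₀ : ℕ, ∀ r s : ℕ, r₀ ≤ r → s₀ ≤ s →
      (Submodule.restrictScalars A
        (idealTorsion R M (Ideal.span (↑(𝒜 (1, 1)) : Set R)))) ⊓ ℳ (r, s) = ⊥ :=
  torsion_components_eventually_vanish_general A R 𝒜 hstd M ℳ
end
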